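/- Suppose a positive stock price process S with S_0 > 0 satisfies E[(S_T - S_0)^+] ~ (|σ_0|/√(2π)) √T as T ↓ 0 with σ_0 ≠ 0, and let σ_impl(T) ∈ [0,∞] be defined by E[(S_T - S_0)^+] = S_0 ( Φ(σ_impl(T)√T/2) - Φ(-σ_impl(T)√T/2) ). Then σ_impl(T) → |σ_0|/S_0 as T ↓ 0. -/

import Mathlib

open MeasureTheory ProbabilityTheory Filter Real

/-- The standard normal cumulative distribution function. -/
noncomputable def stdNormalCDF (x : ℝ) : ℝ := ((gaussianReal 0 1) (Set.Iic x)).toReal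

/-!
Put `Ψ(x) = Φ(x) - Φ(-x)`, so that `Ψ(0) = 0`, `Ψ'(0) = 2φ(0) = √(2/π)` and `Ψ` is strictly
increasing. With `x(T) = σ_impl(T) √T / 2` the defining equation reads `S₀ Ψ(x(T)) = E[(S_T - S₀)⁺]`,
so the hypothesis says `Ψ(x(T)) / √T → |σ₀| / (S₀ √(2π))`. In particular `Ψ(x(T)) → 0`, hence
`x(T) → 0` by monotonicity, and writing `Ψ(x) = x · dslope Ψ 0 x` with `dslope Ψ 0 x → Ψ'(0)` gives
`x(T) / √T → |σ₀| / (2 S₀)`, i.e. `σ_impl(T) → |σ₀| / S₀`.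
-/

open Topology

theorem StrictMono.tendsto_of_tendsto_comp {α β γ : Type*} [LinearOrder β] [TopologicalSpace β]
    [OrderTopology β] [LinearOrder γ] [TopologicalSpace γ] [OrderTopology γ] {f : β → γ}
    (hf : StrictMono f) {u : α → β} {l : Filter α} {c : β}
    (h : Tendsto (f ∘ u) l (𝓝 (f c))) : Tendsto u l (𝓝 c) := by
  rw [tendsto_order] at h ⊢
  exact ⟨fun a ha => (h.1 _ (hf ha)).mono fun _ => hf.lt_iff_lt.mp,
    fun a ha => (h.2 _ (hf ha)).mono fun _ => hf.lt_iff_lt.mp⟩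

theorem HasDerivAt.tendsto_div_of_tendsto_apply_div {α : Type*} {f : ℝ → ℝ} {d L : ℝ}
    (hf : HasDerivAt f d 0) (hf0 : f 0 = 0) (hd : d ≠ 0) {l : Filter α} {u v : α → ℝ}
    (hu : Tendsto u l (𝓝 0)) (h : Tendsto (fun t => f (u t) / v t) l (𝓝 L)) :
    Tendsto (fun t => u t / v t) l (𝓝 (L / d)) := by
  have hslope : Tendsto (fun t => dslope f 0 (u t)) l (𝓝 d) := by
    have := (continuousAt_dslope_same.2 hf.differentiableAt).tendsto.comp hu
    rwa [dslope_same, hf.deriv] at this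
  refine (h.div hslope hd).congr' ?_
  filter_upwards [hslope.eventually_ne hd] with t ht
  have hfactor : f (u t) = u t * dslope f 0 (u t) := by
    simpa [hf0] using (sub_smul_dslope f 0 (u t)).symm
  show f (u t) / v t / dslope f 0 (u t) = u t / v t
  rw [hfactor, mul_div_right_comm, mul_div_cancel_right₀ _ ht]

theorem ProbabilityTheory.continuous_gaussianPDFReal (μ : ℝ) (v : NNReal) : Continuous (gaussianPDFReal μ v) := by
  unfold gaussianPDFReal
  fun_prop

theorem stdNormalCDF_eq_integral (x : ℝ) :
    stdNormalCDF x = ∫ t in Set.Iic x, gaussianPDFReal 0 1 t := by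
  rw [stdNormalCDF, gaussianReal_apply_eq_integral 0 one_ne_zero, ENNReal.toReal_ofReal]
  exact setIntegral_nonneg measurableSet_Iic fun t _ => gaussianPDFReal_nonneg 0 1 t

theorem hasDerivAt_stdNormalCDF (x : ℝ) :
    HasDerivAt stdNormalCDF (gaussianPDFReal 0 1 x) x := by
  have hint := integrable_gaussianPDFReal 0 1
  have hcont := continuous_gaussianPDFReal 0 1
  have hsplit :
      stdNormalCDF = fun y => stdNormalCDF 0 + ∫ t in (0 : ℝ)..y, gaussianPDFReal 0 1 t := by
    funext y
    rw [stdNormalCDF_eq_integral, stdNormalCDF_eq_integral,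
      ← intervalIntegral.integral_Iic_sub_Iic hint.integrableOn hint.integrableOn, add_sub_cancel]
  rw [hsplit]
  exact (intervalIntegral.integral_hasDerivAt_right hint.intervalIntegrable
    hcont.aestronglyMeasurable.stronglyMeasurableAtFilter hcont.continuousAt).const_add _

noncomputable def stdNormalSymmCDF (x : ℝ) : ℝ := stdNormalCDF x - stdNormalCDF (-x)

theorem stdNormalSymmCDF_zero : stdNormalSymmCDF 0 = 0 := by
  simp [stdNormalSymmCDF]

theorem hasDerivAt_stdNormalSymmCDF (x : ℝ) :
    HasDerivAt stdNormalSymmCDF (2 * gaussianPDFReal 0 1 x) x := by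
  have hsymm : gaussianPDFReal 0 1 (-x) = gaussianPDFReal 0 1 x := by
    simp [gaussianPDFReal]
  have hneg := (hasDerivAt_stdNormalCDF (-x)).comp x (hasDerivAt_neg x)
  rw [hsymm] at hneg
  rw [show 2 * gaussianPDFReal 0 1 x = gaussianPDFReal 0 1 x - gaussianPDFReal 0 1 x * -1 by ring]
  exact (hasDerivAt_stdNormalCDF x).sub hneg

theorem hasDerivAt_stdNormalSymmCDF_zero :
    HasDerivAt stdNormalSymmCDF (2 / √(2 * π)) 0 := by
  convert hasDerivAt_stdNormalSymmCDF 0 using 1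
  simp [gaussianPDFReal, div_eq_mul_inv]

theorem strictMono_stdNormalSymmCDF : StrictMono stdNormalSymmCDF :=
  strictMono_of_hasDerivAt_pos hasDerivAt_stdNormalSymmCDF fun x =>
    mul_pos two_pos (gaussianPDFReal_pos 0 1 x one_ne_zero)

theorem implied_volatility_limit_general {Ω : Type*} [MeasurableSpace Ω]
    (P : Measure Ω)
    (S : ℝ → Ω → ℝ)
    (S₀ : ℝ) (hS₀ : 0 < S₀) (σ₀ : ℝ)
    (hasymp : Tendsto (fun T : ℝ => (∫ ω, max (S T ω - S₀) 0 ∂P) / Real.sqrt T)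
      (nhdsWithin 0 (Set.Ioi 0)) (nhds (|σ₀| / Real.sqrt (2 * π))))
    (σimpl : ℝ → ℝ)
    (hσimpl : ∀ T : ℝ, 0 < T →
      ∫ ω, max (S T ω - S₀) 0 ∂P
        = S₀ * (stdNormalCDF (σimpl T * Real.sqrt T / 2)
            - stdNormalCDF (-(σimpl T * Real.sqrt T / 2)))) :
    Tendsto σimpl (nhdsWithin 0 (Set.Ioi 0)) (nhds (|σ₀| / S₀)) := by
  set x : ℝ → ℝ := fun T => σimpl T * √T / 2
  have hsqrt_pos : ∀ᶠ T in 𝓝[>] (0 : ℝ), 0 < √T :=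
    eventually_mem_nhdsWithin.mono fun T hT => Real.sqrt_pos.2 hT
  have hrate : Tendsto (fun T => stdNormalSymmCDF (x T) / √T) (𝓝[>] 0)
      (𝓝 (|σ₀| / √(2 * π) / S₀)) := by
    refine (hasymp.div_const S₀).congr' ?_
    filter_upwards [self_mem_nhdsWithin] with T hT
    rw [hσimpl T hT, div_right_comm, mul_div_cancel_left₀ _ hS₀.ne']
    rfl
  have hx : Tendsto x (𝓝[>] 0) (𝓝 0) := by
    refine strictMono_stdNormalSymmCDF.tendsto_of_tendsto_comp ?_
    have hsqrt : Tendsto (fun T : ℝ => √T) (𝓝[>] 0) (𝓝 0) := by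
      simpa using (continuous_sqrt.tendsto 0).mono_left nhdsWithin_le_nhds
    have hlim := hrate.mul hsqrt
    rw [mul_zero] at hlim
    rw [stdNormalSymmCDF_zero]
    refine hlim.congr' ?_
    filter_upwards [hsqrt_pos] with T hT
    exact div_mul_cancel₀ _ hT.ne'
  have hxrate := (hasDerivAt_stdNormalSymmCDF_zero.tendsto_div_of_tendsto_apply_div
    stdNormalSymmCDF_zero (by positivity) hx hrate).const_mul 2
  convert hxrate.congr' ?_ using 2
  · field_simp
  · filter_upwards [hsqrt_pos] with T hT
    simp only [x]
    field_simp

/-- If a positive stock price process `S` with `S₀ > 0` satisfies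
`E[(S_T - S₀)⁺] ~ (|σ₀|/√(2π)) √T` as `T ↓ 0` with `σ₀ ≠ 0`, and `σ_impl(T) ≥ 0` solves
`E[(S_T - S₀)⁺] = S₀ (Φ(σ_impl(T)√T/2) - Φ(-σ_impl(T)√T/2))`, then
`σ_impl(T) → |σ₀|/S₀` as `T ↓ 0`. -/
theorem implied_volatility_limit {Ω : Type*} [MeasurableSpace Ω]
    (P : Measure Ω) [IsProbabilityMeasure P]
    (S : ℝ → Ω → ℝ) (hSpos : ∀ T ω, 0 < S T ω)
    (S₀ : ℝ) (hS₀ : 0 < S₀) (σ₀ : ℝ) (hσ₀ : σ₀ ≠ 0)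
    (hasymp : Tendsto (fun T : ℝ => (∫ ω, max (S T ω - S₀) 0 ∂P) / Real.sqrt T)
      (nhdsWithin 0 (Set.Ioi 0)) (nhds (|σ₀| / Real.sqrt (2 * π))))
    (σimpl : ℝ → ℝ) (hσimpl_nonneg : ∀ T : ℝ, 0 < T → 0 ≤ σimpl T)
    (hσimpl : ∀ T : ℝ, 0 < T →
      ∫ ω, max (S T ω - S₀) 0 ∂P
        = S₀ * (stdNormalCDF (σimpl T * Real.sqrt T / 2)
            - stdNormalCDF (-(σimpl T * Real.sqrt T / 2)))) :
    Tendsto σimpl (nhdsWithin 0 (Set.Ioi 0)) (nhds (|σ₀| / S₀)) :=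
  implied_volatility_limit_general P S S₀ hS₀ σ₀ hasymp σimpl hσimpl
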